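/- arXiv:1710.03154 — 3 statements merged into one kernel-verified Lean document; each statement's English description precedes it below -/
import Mathlib

section
/- Let n, k be positive integers, let L be a real symmetric positive semidefinite n×n matrix, let L⁺ be an n×n real matrix satisfying the Moore–Penrose conditions L·L⁺·L = L, L⁺·L·L⁺ = L⁺, (L·L⁺)ᵀ = L·L⁺, (L⁺·L)ᵀ = L⁺·L, and let E be a real n×k matrix whose columns lie in the range of L, i.e., L·L⁺·E = E. Then for every real γ > 0, the matrix γ·L − E·Eᵀ is positive semidefinite if and only if the k×k matrix γ·I_k − Eᵀ·L⁺·E is positive semidefinite. -/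
/-!
Write `S = Eᵀ L⁺ E`. The pseudoinverse `L⁺` is symmetric (it is unique, and `L⁺ᵀ` is a
pseudoinverse of `Lᵀ = L`) and positive semidefinite (`L⁺ = L⁺ᵀ L L⁺`), so both directions are
Cauchy–Schwarz arguments ending in `t² ≤ p q`, `q ≤ γ t` ⟹ `t ≤ γ p`.
For `⇒`, testing `γ L ⪰ E Eᵀ` at `x = L⁺ E v` gives `‖S v‖² ≤ γ ⟪v, S v⟫`, and
`⟪v, S v⟫² ≤ ‖v‖² ‖S v‖²`.
For `⇐`, with `v = Eᵀ x` the range condition `L L⁺ E = E` gives `‖v‖² = ⟪L x, L⁺ E v⟫`, and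
Cauchy–Schwarz for the form of `L⁺` bounds its square by `(xᵀ L x) ⟪v, S v⟫ ≤ (xᵀ L x) γ ‖v‖²`.
-/

open Matrix

theorem le_mul_of_sq_le_mul_of_le_mul {γ p q t : ℝ} (hγ : 0 ≤ γ) (hp : 0 ≤ p)
    (hsq : t ^ 2 ≤ p * q) (hq : q ≤ γ * t) : t ≤ γ * p := by
  rcases le_or_gt t 0 with ht | ht
  · exact ht.trans (mul_nonneg hγ hp)
  · nlinarith [mul_le_mul_of_nonneg_left hq hp]

namespace Matrix

variable {ι κ μ m n R : Type*} [Fintype ι] [Fintype κ] [Fintype μ] [Fintype m] [Fintype n]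

structure IsMoorePenroseInverse [CommRing R] (A : Matrix m n R) (X : Matrix n m R) : Prop where
  mul_inv_mul : A * X * A = A
  inv_mul_inv : X * A * X = X
  mul_inv_symm : (A * X)ᵀ = A * X
  inv_mul_symm : (X * A)ᵀ = X * A

namespace IsMoorePenroseInverse

variable [CommRing R] {A : Matrix m n R} {X Y : Matrix n m R}

theorem transpose (h : A.IsMoorePenroseInverse X) : Aᵀ.IsMoorePenroseInverse Xᵀ where
  mul_inv_mul := by
    simpa only [transpose_mul, Matrix.mul_assoc] using congrArg Matrix.transpose h.mul_inv_mul
  inv_mul_inv := by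
    simpa only [transpose_mul, Matrix.mul_assoc] using congrArg Matrix.transpose h.inv_mul_inv
  mul_inv_symm := by rw [← transpose_mul, transpose_transpose, h.inv_mul_symm]
  inv_mul_symm := by rw [← transpose_mul, transpose_transpose, h.mul_inv_symm]

theorem unique (hX : A.IsMoorePenroseInverse X) (hY : A.IsMoorePenroseInverse Y) : X = Y := by
  have hAX : A * X = A * Y :=
    calc A * X = (A * X)ᵀ := hX.mul_inv_symm.symm
      _ = (A * Y * (A * X))ᵀ := by rw [← Matrix.mul_assoc, hY.mul_inv_mul]
      _ = A * X * (A * Y) := by rw [transpose_mul, hX.mul_inv_symm, hY.mul_inv_symm]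
      _ = A * Y := by rw [← Matrix.mul_assoc, hX.mul_inv_mul]
  have hXA : X * A = Y * A :=
    calc X * A = (X * A)ᵀ := hX.inv_mul_symm.symm
      _ = (X * A * (Y * A))ᵀ := by rw [Matrix.mul_assoc X A, ← Matrix.mul_assoc A, hY.mul_inv_mul]
      _ = Y * A * (X * A) := by rw [transpose_mul, hX.inv_mul_symm, hY.inv_mul_symm]
      _ = Y * A := by rw [Matrix.mul_assoc, ← Matrix.mul_assoc A, hX.mul_inv_mul]
  calc X = X * (A * Y) := by rw [← hAX, ← Matrix.mul_assoc, hX.inv_mul_inv]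
    _ = Y := by rw [← Matrix.mul_assoc, hXA, hY.inv_mul_inv]

theorem isSymm {A X : Matrix n n R} (h : A.IsMoorePenroseInverse X) (hA : A.IsSymm) : X.IsSymm :=
  (hA.eq ▸ h.transpose).unique h

theorem isHermitian {A X : Matrix n n ℝ} (h : A.IsMoorePenroseInverse X) (hA : A.IsHermitian) :
    X.IsHermitian :=
  isHermitian_iff_isSymm.mpr (h.isSymm (isHermitian_iff_isSymm.mp hA))

theorem posSemidef {A X : Matrix n n ℝ} (h : A.IsMoorePenroseInverse X) (hA : A.PosSemidef) :
    X.PosSemidef := by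
  simpa only [(h.isHermitian hA.1).eq, h.inv_mul_inv] using hA.conjTranspose_mul_mul_same X

end IsMoorePenroseInverse

theorem dotProduct_mul_mulVec [CommSemiring R] (B : Matrix ι κ R) (C : Matrix κ μ R) (u : ι → R)
    (w : μ → R) : u ⬝ᵥ (B * C) *ᵥ w = (Bᵀ *ᵥ u) ⬝ᵥ C *ᵥ w := by
  rw [← mulVec_mulVec, dotProduct_mulVec, ← mulVec_transpose]

theorem dotProduct_transpose_mul_mul_mulVec [CommSemiring R] (B : Matrix ι κ R) (M : Matrix ι ι R)
    (C : Matrix ι μ R) (u : κ → R) (w : μ → R) :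
    u ⬝ᵥ (Bᵀ * M * C) *ᵥ w = (B *ᵥ u) ⬝ᵥ M *ᵥ (C *ᵥ w) := by
  rw [Matrix.mul_assoc, dotProduct_mul_mulVec, transpose_transpose, ← mulVec_mulVec]

theorem IsHermitian.dotProduct_mulVec_comm {A : Matrix ι ι ℝ} (hA : A.IsHermitian) (u v : ι → ℝ) :
    v ⬝ᵥ A *ᵥ u = u ⬝ᵥ A *ᵥ v := by
  rw [dotProduct_mulVec, ← mulVec_transpose, ← conjTranspose_eq_transpose_of_trivial, hA,
    dotProduct_comm]

theorem PosSemidef.dotProduct_mulVec_sq_le {A : Matrix ι ι ℝ} (hA : A.PosSemidef) (u v : ι → ℝ) :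
    (u ⬝ᵥ A *ᵥ v) ^ 2 ≤ (u ⬝ᵥ A *ᵥ u) * (v ⬝ᵥ A *ᵥ v) := by
  classical
  have := LinearMap.BilinForm.apply_mul_apply_le_of_forall_zero_le (toLinearMap₂' ℝ A)
    (fun x => by simpa [toLinearMap₂'_apply'] using hA.dotProduct_mulVec_nonneg x) u v
  simpa only [toLinearMap₂'_apply', hA.1.dotProduct_mulVec_comm v u, ← sq] using this

theorem posSemidef_sub_iff {A B : Matrix ι ι ℝ} (hA : A.IsHermitian) (hB : B.IsHermitian) :
    (A - B).PosSemidef ↔ ∀ x, x ⬝ᵥ B *ᵥ x ≤ x ⬝ᵥ A *ᵥ x := by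
  rw [posSemidef_iff_dotProduct_mulVec, and_iff_right (hA.sub hB)]
  simp [sub_mulVec, dotProduct_sub]

variable [DecidableEq κ] {L Lp : Matrix ι ι ℝ} {E : Matrix ι κ ℝ} {γ : ℝ}

theorem posSemidef_smul_one_sub_of_posSemidef_smul_sub (hL : L.IsHermitian)
    (hX : L.IsMoorePenroseInverse Lp) (hγ : 0 ≤ γ) (h : (γ • L - E * Eᵀ).PosSemidef) :
    (γ • (1 : Matrix κ κ ℝ) - Eᵀ * Lp * E).PosSemidef := by
  have hLp := hX.isHermitian hL
  rw [posSemidef_sub_iff (hL.smul (.all γ))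
    (conjTranspose_eq_transpose_of_trivial E ▸ isHermitian_mul_conjTranspose_self E)] at h
  rw [posSemidef_sub_iff (isHermitian_one.smul (.all γ))
    (conjTranspose_eq_transpose_of_trivial E ▸ isHermitian_conjTranspose_mul_mul E hLp)]
  intro v
  have hsq := PosSemidef.one.dotProduct_mulVec_sq_le v ((Eᵀ * Lp * E) *ᵥ v)
  simp only [one_mulVec] at hsq
  have hq := h (Lp *ᵥ E *ᵥ v)
  rw [smul_mulVec, dotProduct_smul, smul_eq_mul, dotProduct_mul_mulVec,
    ← dotProduct_transpose_mul_mul_mulVec Lp L Lp,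
    ← conjTranspose_eq_transpose_of_trivial Lp, hLp.eq, hX.inv_mul_inv,
    ← dotProduct_transpose_mul_mul_mulVec E Lp E, mulVec_mulVec, mulVec_mulVec] at hq
  rw [smul_mulVec, one_mulVec, dotProduct_smul, smul_eq_mul]
  exact le_mul_of_sq_le_mul_of_le_mul hγ (dotProduct_star_self_nonneg v) hsq hq

theorem posSemidef_smul_sub_of_posSemidef_smul_one_sub (hL : L.PosSemidef)
    (hX : L.IsMoorePenroseInverse Lp) (hE : L * Lp * E = E) (hγ : 0 ≤ γ)
    (h : (γ • (1 : Matrix κ κ ℝ) - Eᵀ * Lp * E).PosSemidef) : (γ • L - E * Eᵀ).PosSemidef := by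
  have hLp := hX.posSemidef hL
  rw [posSemidef_sub_iff (isHermitian_one.smul (.all γ))
    (conjTranspose_eq_transpose_of_trivial E ▸ isHermitian_conjTranspose_mul_mul E hLp.1)] at h
  rw [posSemidef_sub_iff (hL.1.smul (.all γ))
    (conjTranspose_eq_transpose_of_trivial E ▸ isHermitian_mul_conjTranspose_self E)]
  intro x
  have hsq := hLp.dotProduct_mulVec_sq_le (L *ᵥ x) (E *ᵥ Eᵀ *ᵥ x)
  rw [← dotProduct_transpose_mul_mul_mulVec L Lp E, ← dotProduct_transpose_mul_mul_mulVec L Lp L,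
    ← dotProduct_transpose_mul_mul_mulVec E Lp E, ← conjTranspose_eq_transpose_of_trivial L,
    hL.1.eq, hE, hX.mul_inv_mul, dotProduct_mulVec x E, ← mulVec_transpose] at hsq
  have hq := h (Eᵀ *ᵥ x)
  rw [smul_mulVec, one_mulVec, dotProduct_smul, smul_eq_mul] at hq
  rw [dotProduct_mul_mulVec, smul_mulVec, dotProduct_smul, smul_eq_mul]
  exact le_mul_of_sq_le_mul_of_le_mul hγ (hL.dotProduct_mulVec_nonneg x) hsq hq

end Matrix

theorem schur_iff_pseudoinverse_LMI_general {n k : ℕ}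
    (L : Matrix (Fin n) (Fin n) ℝ) (hL : L.PosSemidef)
    (Lp : Matrix (Fin n) (Fin n) ℝ)
    (h1 : L * Lp * L = L) (h2 : Lp * L * Lp = Lp)
    (h3 : (L * Lp)ᵀ = L * Lp) (h4 : (Lp * L)ᵀ = Lp * L)
    (E : Matrix (Fin n) (Fin k) ℝ) (hE : L * Lp * E = E) :
    ∀ γ : ℝ, 0 < γ →
      ((γ • L - E * Eᵀ).PosSemidef ↔
        (γ • (1 : Matrix (Fin k) (Fin k) ℝ) - Eᵀ * Lp * E).PosSemidef) := by
  intro γ hγ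
  have hX : L.IsMoorePenroseInverse Lp := ⟨h1, h2, h3, h4⟩
  exact ⟨posSemidef_smul_one_sub_of_posSemidef_smul_sub hL.1 hX hγ.le,
    posSemidef_smul_sub_of_posSemidef_smul_one_sub hL hX hE hγ.le⟩

/-- For `L` symmetric PSD with Moore–Penrose pseudoinverse `Lp`, and `E` whose
columns lie in the range of `L` (i.e. `L·Lp·E = E`), for every `γ > 0`:
`γ·L − E·Eᵀ ⪰ 0` iff `γ·I_k − Eᵀ·Lp·E ⪰ 0`. -/
theorem schur_iff_pseudoinverse_LMI {n k : ℕ} (hn : 0 < n) (hk : 0 < k)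
    (L : Matrix (Fin n) (Fin n) ℝ) (hL : L.PosSemidef)
    (Lp : Matrix (Fin n) (Fin n) ℝ)
    (h1 : L * Lp * L = L) (h2 : Lp * L * Lp = Lp)
    (h3 : (L * Lp)ᵀ = L * Lp) (h4 : (Lp * L)ᵀ = Lp * L)
    (E : Matrix (Fin n) (Fin k) ℝ) (hE : L * Lp * E = E) :
    ∀ γ : ℝ, 0 < γ →
      ((γ • L - E * Eᵀ).PosSemidef ↔
        (γ • (1 : Matrix (Fin k) (Fin k) ℝ) - Eᵀ * Lp * E).PosSemidef) :=
  schur_iff_pseudoinverse_LMI_general L hL Lp h1 h2 h3 h4 E hE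
end

section
/- Let n ≥ 2 and let L be a real symmetric positive semidefinite n×n matrix with L·𝟙 = 0 whose kernel is exactly the span of 𝟙 (i.e., L·x = 0 implies x is a scalar multiple of 𝟙). Let L⁺ be an n×n real matrix satisfying L·L⁺·L = L, L⁺·L·L⁺ = L⁺, (L·L⁺)ᵀ = L·L⁺, (L⁺·L)ᵀ = L⁺·L. Let u ≠ v be two indices, let b = e_u − e_v, and let w > 0 be a real number. Then the matrix L − w·b·bᵀ is positive semidefinite if and only if w·(bᵀ·L⁺·b) ≤ 1, i.e., the magnitude w of the negative edge weight does not exceed the inverse of the effective resistance R_uv = bᵀ·L⁺·b between u and v. -/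
/-!
Since `b = e_u - e_v` is orthogonal to `ker L = span 𝟙`, and `L L⁺` is the orthogonal projection
onto `range L = (ker L)ᗮ`, the vector `y = L⁺ b` solves `L y = b`; then `r = bᵀ L⁺ b = yᵀ L y ≥ 0`.
Cauchy–Schwarz for the semi-inner product `xᵀ L y` gives `(bᵀ x)² = (yᵀ L x)² ≤ r · xᵀ L x`, so
`xᵀ (L - w b bᵀ) x ≥ (1 - w r) · xᵀ L x` when `w ≥ 0` (for `w < 0` both sides hold trivially).
Conversely, testing the quadratic form at `x = y` gives `r (1 - w r) ≥ 0`.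
-/

open Matrix

namespace Matrix

variable {ι : Type*} [Fintype ι]

theorem PosSemidef.dotProduct_mulVec_sq_le_s3 {M : Matrix ι ι ℝ} (hM : M.PosSemidef)
    (x y : ι → ℝ) : (x ⬝ᵥ M *ᵥ y) ^ 2 ≤ (x ⬝ᵥ M *ᵥ x) * (y ⬝ᵥ M *ᵥ y) := by
  let := M.toSeminormedAddCommGroup hM
  let := M.toInnerProductSpace hM
  have inner_eq (a b : ι → ℝ) : inner ℝ a b = a ⬝ᵥ M *ᵥ b := by
    change (M *ᵥ b) ⬝ᵥ star a = _
    rw [star_trivial, dotProduct_comm]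
  simpa only [inner_eq, sq] using real_inner_mul_inner_self_le x y

theorem dotProduct_sub_smul_vecMulVec_mulVec (M : Matrix ι ι ℝ) (w : ℝ) (b x : ι → ℝ) :
    x ⬝ᵥ (M - w • vecMulVec b b) *ᵥ x = x ⬝ᵥ M *ᵥ x - w * (b ⬝ᵥ x) ^ 2 := by
  rw [sub_mulVec, smul_mulVec, vecMulVec_mulVec, dotProduct_sub, dotProduct_smul,
    op_smul_eq_smul, dotProduct_smul, smul_eq_mul, smul_eq_mul, dotProduct_comm x b]
  ring

theorem IsSymm.dotProduct_mulVec_comm {M : Matrix ι ι ℝ} (hM : M.IsSymm) (x y : ι → ℝ) :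
    x ⬝ᵥ M *ᵥ y = (M *ᵥ x) ⬝ᵥ y := by
  rw [dotProduct_mulVec, ← mulVec_transpose, hM.eq]

theorem PosSemidef.posSemidef_sub_smul_vecMulVec_iff {M : Matrix ι ι ℝ} (hM : M.PosSemidef)
    {b y : ι → ℝ} (hy : M *ᵥ y = b) (w : ℝ) :
    (M - w • vecMulVec b b).PosSemidef ↔ w * (b ⬝ᵥ y) ≤ 1 := by
  have hsymm : M.IsSymm := isHermitian_iff_isSymm.mp hM.1
  have hyMy : y ⬝ᵥ M *ᵥ y = b ⬝ᵥ y := by rw [hy, dotProduct_comm]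
  have hr : 0 ≤ b ⬝ᵥ y := hyMy ▸ hM.dotProduct_mulVec_nonneg y
  constructor
  · intro h
    have hq := h.dotProduct_mulVec_nonneg y
    rw [star_trivial, dotProduct_sub_smul_vecMulVec_mulVec, hyMy] at hq
    rcases hr.eq_or_lt with hr0 | hrpos
    · rw [← hr0, mul_zero]
      exact zero_le_one
    · nlinarith
  · intro hwr
    refine .of_dotProduct_mulVec_nonneg (hM.1.sub ?_) fun x => ?_
    · ext i j
      simp [vecMulVec_apply, mul_comm]
    have hbx : b ⬝ᵥ x = y ⬝ᵥ M *ᵥ x := by rw [hsymm.dotProduct_mulVec_comm, hy]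
    have hcs := hM.dotProduct_mulVec_sq_le_s3 y x
    have hxMx : 0 ≤ x ⬝ᵥ M *ᵥ x := by simpa using hM.dotProduct_mulVec_nonneg x
    rw [star_trivial, dotProduct_sub_smul_vecMulVec_mulVec, hbx]
    rw [hyMy] at hcs
    rcases le_or_gt 0 w with hw | hw <;> nlinarith

theorem IsSymm.mulVec_mulVec_eq_of_orthogonal_ker {L Lp : Matrix ι ι ℝ} (hL : L.IsSymm)
    (h1 : L * Lp * L = L) (h3 : (L * Lp)ᵀ = L * Lp) {b : ι → ℝ}
    (hb : ∀ z, L *ᵥ z = 0 → z ⬝ᵥ b = 0) : L *ᵥ (Lp *ᵥ b) = b := by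
  have hLLLp : L * (L * Lp) = L := by
    rw [← transpose_transpose (L * (L * Lp)), transpose_mul, h3, hL.eq, h1, hL.eq]
  set z := b - L *ᵥ (Lp *ᵥ b)
  have hLz : L *ᵥ z = 0 := by
    rw [mulVec_sub, mulVec_mulVec, mulVec_mulVec, Matrix.mul_assoc, hLLLp, sub_self]
  have hzz : z ⬝ᵥ z = 0 :=
    calc z ⬝ᵥ z = z ⬝ᵥ b - z ⬝ᵥ L *ᵥ (Lp *ᵥ b) := dotProduct_sub _ _ _
      _ = 0 := by rw [hb z hLz, hL.dotProduct_mulVec_comm, hLz, zero_dotProduct, sub_self]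
  exact (sub_eq_zero.mp (dotProduct_self_eq_zero.mp hzz)).symm

end Matrix

theorem negative_edge_psd_iff_effective_resistance_general {n : ℕ}
    (L : Matrix (Fin n) (Fin n) ℝ) (hL : L.PosSemidef)
    (hker : ∀ x : Fin n → ℝ, L *ᵥ x = 0 → ∃ c : ℝ, x = c • (fun _ => (1 : ℝ)))
    (Lp : Matrix (Fin n) (Fin n) ℝ)
    (h1 : L * Lp * L = L)
    (h3 : (L * Lp)ᵀ = L * Lp)
    (u v : Fin n) (w : ℝ) :
    (L - w • vecMulVec (Pi.single u 1 - Pi.single v 1) (Pi.single u 1 - Pi.single v 1)).PosSemidef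
      ↔ w * ((Pi.single u 1 - Pi.single v 1) ⬝ᵥ
              (Lp *ᵥ (Pi.single u 1 - Pi.single v 1))) ≤ 1 := by
  have hb : ∀ z, L *ᵥ z = 0 → z ⬝ᵥ (Pi.single u 1 - Pi.single v 1 : Fin n → ℝ) = 0 := by
    intro z hz
    obtain ⟨c, rfl⟩ := hker z hz
    simp
  exact hL.posSemidef_sub_smul_vecMulVec_iff
    ((isHermitian_iff_isSymm.mp hL.1).mulVec_mulVec_eq_of_orthogonal_ker h1 h3 hb) w

/-- Lemma 1 of the paper / Zelazo et al., Thm III.3: for a connected-graph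
Laplacian `L` (symmetric PSD, `L·𝟙 = 0`, kernel exactly `span{𝟙}`) with Moore–Penrose
pseudoinverse `Lp`, indices `u ≠ v`, `b = e_u − e_v` and `w > 0`:
`L − w·b·bᵀ ⪰ 0` iff `w·(bᵀ·Lp·b) ≤ 1`. -/
theorem negative_edge_psd_iff_effective_resistance {n : ℕ} (hn : 2 ≤ n)
    (L : Matrix (Fin n) (Fin n) ℝ) (hL : L.PosSemidef)
    (hL1 : L *ᵥ (fun _ => (1 : ℝ)) = 0)
    (hker : ∀ x : Fin n → ℝ, L *ᵥ x = 0 → ∃ c : ℝ, x = c • (fun _ => (1 : ℝ)))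
    (Lp : Matrix (Fin n) (Fin n) ℝ)
    (h1 : L * Lp * L = L) (h2 : Lp * L * Lp = Lp)
    (h3 : (L * Lp)ᵀ = L * Lp) (h4 : (Lp * L)ᵀ = Lp * L)
    (u v : Fin n) (huv : u ≠ v) (w : ℝ) (hw : 0 < w) :
    (L - w • vecMulVec (Pi.single u 1 - Pi.single v 1) (Pi.single u 1 - Pi.single v 1)).PosSemidef
      ↔ w * ((Pi.single u 1 - Pi.single v 1) ⬝ᵥ
              (Lp *ᵥ (Pi.single u 1 - Pi.single v 1))) ≤ 1 :=
  negative_edge_psd_iff_effective_resistance_general L hL hker Lp h1 h3 u v w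
end

section
/- Let n be a positive integer, let L be a real symmetric positive definite n×n matrix, and let ω be a real number. Let L_ℂ denote the complex matrix obtained from L by mapping each real entry into ℂ, and let M = L_ℂ + (ω·i)·I_n. Then M is invertible, and for every vector x ∈ ℂⁿ, the complex modulus of the quadratic form x̄ᵀ·M⁻¹·x is at most the (real, nonnegative) quadratic form x̄ᵀ·(L_ℂ)⁻¹·x, i.e., |x̄ᵀ·(L_ℂ + iω·I)⁻¹·x| ≤ x̄ᵀ·L_ℂ⁻¹·x. -/
/-!
Complexify `L` and diagonalise it by a unitary `U`: `L_ℂ = U diag(μ) U*` with all `μ i > 0`.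
Then `L_ℂ + iω = U diag(μ + iω) U*`, so with `y = U* x` both quadratic forms are weighted sums
of the `|y i|²`: `x̄ᵀ (L_ℂ + iω)⁻¹ x = ∑ (μ i + iω)⁻¹ |y i|²` and `x̄ᵀ L_ℂ⁻¹ x = ∑ (μ i)⁻¹ |y i|²`.
The bound follows from the triangle inequality and `μ i ≤ |μ i + iω|`.
-/

open Matrix Unitary
open scoped ComplexOrder

namespace Matrix

variable {n : Type*} [Fintype n]

theorem PosDef.map_ofReal {L : Matrix n n ℝ} (hL : L.PosDef) :
    (L.map ((↑) : ℝ → ℂ)).PosDef := by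
  have hH : (L.map ((↑) : ℝ → ℂ)).IsHermitian :=
    hL.1.map _ fun r => (Complex.conj_ofReal r).symm
  refine PosDef.of_dotProduct_mulVec_pos hH fun z hz => ?_
  set a : n → ℝ := fun i => (z i).re
  set b : n → ℝ := fun i => (z i).im
  have hre : (star z ⬝ᵥ (L.map ((↑) : ℝ → ℂ) *ᵥ z)).re = a ⬝ᵥ (L *ᵥ a) + b ⬝ᵥ (L *ᵥ b) := by
    simp only [dotProduct, mulVec, Finset.mul_sum, ← Finset.sum_add_distrib, Complex.re_sum]
    refine Finset.sum_congr rfl fun i _ => Finset.sum_congr rfl fun j _ => ?_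
    simp [a, b, Complex.mul_re, Complex.mul_im]
  have hab : a ≠ 0 ∨ b ≠ 0 := by
    by_contra! h
    exact hz (funext fun i => Complex.ext (congrFun h.1 i) (congrFun h.2 i))
  refine Complex.lt_def.mpr ⟨?_, (hH.im_star_dotProduct_mulVec_self z).symm⟩
  rw [Complex.zero_re, hre]
  rcases hab with ha | hb
  · exact add_pos_of_pos_of_nonneg (hL.dotProduct_mulVec_pos ha)
      (hL.posSemidef.dotProduct_mulVec_nonneg b)
  · exact add_pos_of_nonneg_of_pos (hL.posSemidef.dotProduct_mulVec_nonneg a)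
      (hL.dotProduct_mulVec_pos hb)

variable [DecidableEq n] {𝕜 : Type*} [RCLike 𝕜]

theorem star_dotProduct_diagonal_mulVec (d x : n → 𝕜) :
    star x ⬝ᵥ (diagonal d *ᵥ x) = ∑ i, d i * (‖x i‖ ^ 2 : ℝ) := by
  refine Finset.sum_congr rfl fun i _ => ?_
  rw [mulVec_diagonal, Pi.star_apply, RCLike.star_def, ← mul_assoc, mul_comm _ (d i), mul_assoc,
    RCLike.conj_mul]
  push_cast
  ring

theorem star_dotProduct_conjStarAlgAut_mulVec (U : unitaryGroup n 𝕜) (X : Matrix n n 𝕜)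
    (x : n → 𝕜) :
    star x ⬝ᵥ (conjStarAlgAut 𝕜 _ U X *ᵥ x) =
      star (star (U : Matrix n n 𝕜) *ᵥ x) ⬝ᵥ (X *ᵥ (star (U : Matrix n n 𝕜) *ᵥ x)) := by
  rw [conjStarAlgAut_apply, ← mulVec_mulVec, ← mulVec_mulVec, dotProduct_mulVec, star_mulVec,
    star_eq_conjTranspose, conjTranspose_conjTranspose]

theorem inv_conjStarAlgAut (U : unitaryGroup n 𝕜) (X : Matrix n n 𝕜) :
    (conjStarAlgAut 𝕜 _ U X)⁻¹ = conjStarAlgAut 𝕜 _ U X⁻¹ := by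
  rw [conjStarAlgAut_apply, conjStarAlgAut_apply, mul_inv_rev, mul_inv_rev,
    inv_eq_left_inv (mem_unitaryGroup_iff.mp U.2), inv_eq_left_inv (mem_unitaryGroup_iff'.mp U.2),
    mul_assoc]

theorem inv_diagonal_of_ne_zero {d : n → 𝕜} (hd : ∀ i, d i ≠ 0) :
    (diagonal d)⁻¹ = diagonal d⁻¹ :=
  inv_eq_left_inv <| by
    rw [diagonal_mul_diagonal, ← diagonal_one]
    exact congrArg diagonal (funext fun i => inv_mul_cancel₀ (hd i))

variable {A : Matrix n n 𝕜} (hA : A.IsHermitian)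
include hA

theorem IsHermitian.add_smul_one_eq (c : 𝕜) :
    A + c • 1 = conjStarAlgAut 𝕜 _ hA.eigenvectorUnitary
      (diagonal fun i => (hA.eigenvalues i : 𝕜) + c) := by
  conv_lhs => rw [hA.spectral_theorem]
  rw [← map_one (conjStarAlgAut 𝕜 _ hA.eigenvectorUnitary), ← map_smul, ← map_add]
  congr 1
  ext i j
  rcases eq_or_ne i j with rfl | h <;> simp [*]

variable {c : 𝕜} (hc : ∀ i, (hA.eigenvalues i : 𝕜) + c ≠ 0)
include hc

theorem IsHermitian.isUnit_add_smul_one : IsUnit (A + c • 1) := by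
  rw [hA.add_smul_one_eq]
  exact (isUnit_diagonal.mpr (Pi.isUnit_iff.mpr fun i => (hc i).isUnit)).map _

theorem IsHermitian.star_dotProduct_inv_add_smul_one_mulVec (x : n → 𝕜) :
    star x ⬝ᵥ ((A + c • 1)⁻¹ *ᵥ x) =
      ∑ i, ((hA.eigenvalues i : 𝕜) + c)⁻¹ *
        (‖(star (hA.eigenvectorUnitary : Matrix n n 𝕜) *ᵥ x) i‖ ^ 2 : ℝ) := by
  rw [hA.add_smul_one_eq, inv_conjStarAlgAut, inv_diagonal_of_ne_zero hc,
    star_dotProduct_conjStarAlgAut_mulVec, star_dotProduct_diagonal_mulVec]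
  rfl

omit hc in
theorem IsHermitian.star_dotProduct_inv_mulVec (h : ∀ i, hA.eigenvalues i ≠ 0) (x : n → 𝕜) :
    star x ⬝ᵥ (A⁻¹ *ᵥ x) =
      ∑ i, (hA.eigenvalues i : 𝕜)⁻¹ *
        (‖(star (hA.eigenvectorUnitary : Matrix n n 𝕜) *ᵥ x) i‖ ^ 2 : ℝ) := by
  simpa using hA.star_dotProduct_inv_add_smul_one_mulVec (c := 0) (by simpa using h) x

end Matrix

namespace Complex

theorem norm_inv_ofReal_add_mul_I_le {r : ℝ} (hr : 0 < r) (ω : ℝ) :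
    ‖((r : ℂ) + ω * I)⁻¹‖ ≤ r⁻¹ := by
  rw [norm_inv]
  refine inv_anti₀ hr ?_
  simpa using re_le_norm ((r : ℂ) + ω * I)

theorem norm_sum_inv_ofReal_add_mul_I_mul_le {ι : Type*} (s : Finset ι) {μ w : ι → ℝ}
    (hμ : ∀ i ∈ s, 0 < μ i) (hw : ∀ i ∈ s, 0 ≤ w i) (ω : ℝ) :
    ‖∑ i ∈ s, ((μ i : ℂ) + ω * I)⁻¹ * w i‖ ≤ ∑ i ∈ s, (μ i)⁻¹ * w i :=
  (norm_sum_le _ _).trans <| Finset.sum_le_sum fun i hi => by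
    rw [norm_mul, norm_real, Real.norm_of_nonneg (hw i hi)]
    exact mul_le_mul_of_nonneg_right (norm_inv_ofReal_add_mul_I_le (hμ i hi) ω) (hw i hi)

end Complex

theorem quadratic_form_resolvent_bound_general {n : ℕ}
    (L : Matrix (Fin n) (Fin n) ℝ) (hL : L.PosDef) (ω : ℝ) :
    IsUnit (L.map ((↑) : ℝ → ℂ) + ((ω : ℂ) * Complex.I) • (1 : Matrix (Fin n) (Fin n) ℂ)) ∧
      ∀ x : Fin n → ℂ,
        ‖(star x ⬝ᵥ
            ((L.map ((↑) : ℝ → ℂ) + ((ω : ℂ) * Complex.I) • (1 : Matrix (Fin n) (Fin n) ℂ))⁻¹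
              *ᵥ x))‖ ≤
          (star x ⬝ᵥ ((L.map ((↑) : ℝ → ℂ))⁻¹ *ᵥ x)).re := by
  have hLC := hL.map_ofReal
  have hA : (L.map ((↑) : ℝ → ℂ)).IsHermitian := hLC.1
  have hμ : ∀ i, 0 < hA.eigenvalues i := hLC.eigenvalues_pos
  have hd : ∀ i, (hA.eigenvalues i : ℂ) + ω * Complex.I ≠ 0 := fun i h => by
    simpa [(hμ i).ne'] using congrArg Complex.re h
  refine ⟨hA.isUnit_add_smul_one hd, fun x => ?_⟩
  rw [hA.star_dotProduct_inv_add_smul_one_mulVec hd,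
    hA.star_dotProduct_inv_mulVec fun i => (hμ i).ne']
  set y := star (hA.eigenvectorUnitary : Matrix (Fin n) (Fin n) ℂ) *ᵥ x
  calc _ ≤ ∑ i, (hA.eigenvalues i)⁻¹ * ‖y i‖ ^ 2 :=
        Complex.norm_sum_inv_ofReal_add_mul_I_mul_le _ (fun i _ => hμ i)
          (fun i _ => by positivity) ω
    _ = _ := by
        simp only [← RCLike.ofReal_inv, ← RCLike.ofReal_mul, ← RCLike.ofReal_sum,
          ← RCLike.re_to_complex, RCLike.ofReal_re]

/-- for `L` real symmetric positive definite and `ω : ℝ`, the complex matrix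
`M = L_ℂ + (ω·i)·I` is invertible and for every `x : ℂⁿ`,
`|x̄ᵀ·M⁻¹·x| ≤ x̄ᵀ·L_ℂ⁻¹·x` (the right-hand side being real and nonnegative). -/
theorem quadratic_form_resolvent_bound {n : ℕ} (hn : 0 < n)
    (L : Matrix (Fin n) (Fin n) ℝ) (hL : L.PosDef) (ω : ℝ) :
    IsUnit (L.map ((↑) : ℝ → ℂ) + ((ω : ℂ) * Complex.I) • (1 : Matrix (Fin n) (Fin n) ℂ)) ∧
      ∀ x : Fin n → ℂ,
        ‖(star x ⬝ᵥ
            ((L.map ((↑) : ℝ → ℂ) + ((ω : ℂ) * Complex.I) • (1 : Matrix (Fin n) (Fin n) ℂ))⁻¹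
              *ᵥ x))‖ ≤
          (star x ⬝ᵥ ((L.map ((↑) : ℝ → ℂ))⁻¹ *ᵥ x)).re :=
  quadratic_form_resolvent_bound_general L hL ω
end
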